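/- arXiv:0806.3188 — 3 statements merged into one kernel-verified Lean document; each statement's English description precedes it below -/
import Mathlib

section
/- Let u₁, u₂ ∈ [0,1) and θ ∈ [0,1) with u₁ + u₂ - θ u₁ u₂ < 1. Writing 1/(1 - u₁ - u₂ + θ u₁ u₂) = ∑_{j,k≥0} D_{j,k} u₁^j u₂^k as a double power series, for all 0 ≤ j ≤ k one has D_{j,k} = ∑_{p=0}^{j} (1-θ)^p C(j,p) C(k,p). -/
/-!
Write `a = 1 - θ`, so that `1 - u₁ - u₂ + θ u₁ u₂ = (1 - u₁)(1 - u₂) - a u₁ u₂`. A geometric series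
gives `1 / (1 - u₁ - u₂ + θ u₁ u₂) = ∑ₚ aᵖ · u₁ᵖ / (1 - u₁)ᵖ⁺¹ · u₂ᵖ / (1 - u₂)ᵖ⁺¹`, and
`uᵖ / (1 - u)ᵖ⁺¹ = ∑ⱼ C(j, p) uʲ`. All terms of the resulting triple series are nonnegative, so it
may be regrouped by `(j, k)`, which yields the coefficient `∑ₚ aᵖ C(j, p) C(k, p)`.

The coefficients of a double power series are determined by its sums on a box `(0, ε)²`: fixing
the second variable reduces this to one variable, where the sum is analytic at `0` and vanishes on
`(0, ε)`, hence vanishes identically near `0` by the isolated zeros principle.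
-/

open Finset Set FormalMultilinearSeries

theorem eq_zero_of_hasSum_mul_pow_eq_zero {d : ℕ → ℝ} {ε : ℝ} (hε : 0 < ε)
    (h : ∀ x ∈ Ioo 0 ε, HasSum (fun n => d n * x ^ n) 0) : d = 0 := by
  set p := ofScalars ℝ d
  have hsum_eq : ∀ x ∈ Ioo 0 ε, p.sum x = 0 := fun x hx => by
    simpa [FormalMultilinearSeries.sum, p, ofScalars_apply_eq, mul_comm] using (h x hx).tsum_eq
  have hrad : 0 < p.radius := by
    set r : NNReal := ⟨ε / 2, by positivity⟩
    have hr : (r : ℝ) ∈ Ioo 0 ε := ⟨half_pos hε, half_lt_self hε⟩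
    refine (ENNReal.coe_pos.mpr (NNReal.coe_pos.mp hr.1)).trans_le (p.le_radius_of_summable ?_)
    simpa [p, ofScalars_norm, abs_mul, abs_of_pos hr.1] using (h _ hr).summable.abs
  by_contra hd
  have hne := (p.hasFPowerSeriesOnBall hrad).hasFPowerSeriesAt.locally_ne_zero
    (mt (ofScalars_series_eq_zero ℝ).mp hd)
  obtain ⟨x, hx, hx0⟩ := ((hne.filter_mono (nhdsGT_le_nhdsNE 0)).and (Ioo_mem_nhdsGT hε)).exists
  exact hx (hsum_eq x hx0)

theorem eq_zero_of_hasSum_mul_pow_mul_pow_eq_zero {c : ℕ → ℕ → ℝ} {ε : ℝ} (hε : 0 < ε)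
    (h : ∀ x ∈ Ioo 0 ε, ∀ y ∈ Ioo 0 ε,
      HasSum (fun jk : ℕ × ℕ => c jk.1 jk.2 * x ^ jk.1 * y ^ jk.2) 0) : c = 0 := by
  have row_summable : ∀ y ∈ Ioo 0 ε, ∀ j, Summable fun k => c j k * y ^ k := fun y hy j => by
    have hx : ε / 2 ∈ Ioo 0 ε := ⟨half_pos hε, half_lt_self hε⟩
    refine (summable_mul_right_iff (pow_ne_zero j hx.1.ne')).mp ?_
    simpa only [mul_right_comm] using (h _ hx y hy).summable.prod_factor j
  have row_sum_eq_zero : ∀ y ∈ Ioo 0 ε, (fun j => ∑' k, c j k * y ^ k) = 0 := fun y hy =>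
    eq_zero_of_hasSum_mul_pow_eq_zero hε fun x hx =>
      (h x hx y hy).prod_fiberwise fun j => by
        simpa only [mul_right_comm] using ((row_summable y hy j).hasSum.mul_right (x ^ j))
  ext j : 1
  refine eq_zero_of_hasSum_mul_pow_eq_zero hε fun y hy => ?_
  simpa [congrFun (row_sum_eq_zero y hy) j] using (row_summable y hy j).hasSum

theorem hasSum_prod_of_nonneg {α β : Type*} {f : α × β → ℝ} (hf : 0 ≤ f) {g : α → ℝ} {s : ℝ}
    (hfib : ∀ a, HasSum (fun b => f (a, b)) (g a)) (hg : HasSum g s) : HasSum f s := by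
  have hfib_summable a := (hfib a).summable
  have hsum : Summable f := (summable_prod_of_nonneg hf).mpr
    ⟨hfib_summable, by simpa only [(hfib _).tsum_eq] using hg.summable⟩
  convert hsum.hasSum
  simp only [hsum.tsum_prod' hfib_summable, (hfib _).tsum_eq, hg.tsum_eq]

theorem hasSum_choose_mul_pow {𝕜 : Type*} [NormedField 𝕜] [CompleteSpace 𝕜] {u : 𝕜}
    (hu : ‖u‖ < 1) (p : ℕ) :
    HasSum (fun j => (j.choose p : 𝕜) * u ^ j) (u ^ p / (1 - u) ^ (p + 1)) := by
  rw [← hasSum_nat_add_iff' p, sum_eq_zero fun i hi => by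
    rw [Nat.choose_eq_zero_of_lt (mem_range.mp hi), Nat.cast_zero, zero_mul], sub_zero]
  simpa [pow_add, mul_assoc, div_eq_inv_mul, mul_comm] using
    (hasSum_choose_mul_geometric_of_norm_lt_one p hu).mul_right (u ^ p)

/-- The coefficient `D_{j,k}` is `weightedDelannoy (1 - θ) j k`; for `a = 2` these are the
Delannoy numbers. -/
noncomputable def weightedDelannoy (a : ℝ) (j k : ℕ) : ℝ :=
  ∑ p ∈ range (j + 1), a ^ p * (j.choose p : ℝ) * (k.choose p : ℝ)

theorem hasSum_pow_mul_div_pow_mul_div_pow {a u v : ℝ} (ha : 0 ≤ a) (hu₀ : 0 ≤ u) (hu₁ : u < 1)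
    (hv₀ : 0 ≤ v) (hv₁ : v < 1) (huv : a * u * v < (1 - u) * (1 - v)) :
    HasSum (fun p : ℕ => a ^ p * (u ^ p / (1 - u) ^ (p + 1) * (v ^ p / (1 - v) ^ (p + 1))))
      (1 / ((1 - u) * (1 - v) - a * u * v)) := by
  have hu : 0 < 1 - u := sub_pos.mpr hu₁
  have hv : 0 < 1 - v := sub_pos.mpr hv₁
  set t := a * u * v / ((1 - u) * (1 - v))
  have ht : t < 1 := (div_lt_one (by positivity)).mpr huv
  have hterm (p : ℕ) : a ^ p * (u ^ p / (1 - u) ^ (p + 1) * (v ^ p / (1 - v) ^ (p + 1))) =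
      ((1 - u) * (1 - v))⁻¹ * t ^ p := by
    rw [div_pow, mul_pow, mul_pow, mul_pow, pow_succ, pow_succ]
    field_simp
  have hsum : 1 / ((1 - u) * (1 - v) - a * u * v) = ((1 - u) * (1 - v))⁻¹ * (1 - t)⁻¹ := by
    simp only [t]
    field_simp [(sub_pos.mpr huv).ne']
  simpa only [hterm, hsum] using
    (hasSum_geometric_of_lt_one (by positivity) ht).mul_left ((1 - u) * (1 - v))⁻¹

theorem hasSum_weightedDelannoy {a u v : ℝ} (ha : 0 ≤ a) (hu₀ : 0 ≤ u) (hu₁ : u < 1)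
    (hv₀ : 0 ≤ v) (hv₁ : v < 1) (huv : a * u * v < (1 - u) * (1 - v)) :
    HasSum (fun jk : ℕ × ℕ => weightedDelannoy a jk.1 jk.2 * u ^ jk.1 * v ^ jk.2)
      (1 / ((1 - u) * (1 - v) - a * u * v)) := by
  have hu : ‖u‖ < 1 := by rwa [Real.norm_of_nonneg hu₀]
  have hv : ‖v‖ < 1 := by rwa [Real.norm_of_nonneg hv₀]
  have hprod p : HasSum
      (fun jk : ℕ × ℕ => (jk.1.choose p * u ^ jk.1 : ℝ) * (jk.2.choose p * v ^ jk.2))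
      (u ^ p / (1 - u) ^ (p + 1) * (v ^ p / (1 - v) ^ (p + 1))) := by
    refine hasSum_prod_of_nonneg
      (g := fun j => (j.choose p * u ^ j : ℝ) * (v ^ p / (1 - v) ^ (p + 1)))
      (fun jk => ?_) (fun j => ?_) ?_
    · dsimp only
      positivity
    · exact (hasSum_choose_mul_pow hv p).mul_left _
    · exact (hasSum_choose_mul_pow hu p).mul_right _
  have htotal : HasSum (fun x : ℕ × ℕ × ℕ =>
      a ^ x.1 * ((x.2.1.choose x.1 * u ^ x.2.1 : ℝ) * (x.2.2.choose x.1 * v ^ x.2.2))) _ :=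
    hasSum_prod_of_nonneg (fun x => by positivity) (fun p => (hprod p).mul_left (a ^ p))
      (hasSum_pow_mul_div_pow_mul_div_pow ha hu₀ hu₁ hv₀ hv₁ huv)
  refine ((Equiv.prodComm _ _).hasSum_iff.mpr htotal).prod_fiberwise fun jk => ?_
  convert hasSum_sum_of_ne_finset_zero (L := .unconditional ℕ) (s := range (jk.1 + 1))
    fun p hp => ?_
  · simp only [weightedDelannoy, sum_mul]
    refine sum_congr rfl fun p _ => ?_
    simp only [Function.comp_apply, Equiv.prodComm_apply, Prod.swap]
    ring
  · simp [Nat.choose_eq_zero_of_lt (not_lt.mp (mt mem_range.mpr hp))]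

theorem D_coefficients (θ : ℝ) (hθ : 0 ≤ θ) (hθ' : θ < 1) (D : ℕ → ℕ → ℝ)
    (hD : ∀ u₁ u₂ : ℝ, 0 ≤ u₁ → u₁ < 1 → 0 ≤ u₂ → u₂ < 1 →
      u₁ + u₂ - θ * u₁ * u₂ < 1 →
      HasSum (fun jk : ℕ × ℕ => D jk.1 jk.2 * u₁ ^ jk.1 * u₂ ^ jk.2)
        (1 / (1 - u₁ - u₂ + θ * u₁ * u₂))) :
    ∀ j k : ℕ, j ≤ k →
      D j k = ∑ p ∈ Finset.range (j + 1),
        (1 - θ) ^ p * (j.choose p : ℝ) * (k.choose p : ℝ) := by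
  have hcoeff : (fun j k => D j k - weightedDelannoy (1 - θ) j k) = 0 :=
    eq_zero_of_hasSum_mul_pow_mul_pow_eq_zero one_half_pos fun x ⟨hx₀, hx⟩ y ⟨hy₀, hy⟩ => by
      have hxy : x + y - θ * x * y < 1 := by
        nlinarith [mul_nonneg (mul_nonneg hθ hx₀.le) hy₀.le]
      have hx₁ : x < 1 := hx.trans one_half_lt_one
      have hy₁ : y < 1 := hy.trans one_half_lt_one
      have hW := hasSum_weightedDelannoy (sub_nonneg.mpr hθ'.le) hx₀.le hx₁ hy₀.le hy₁
        (by linear_combination hxy)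
      rw [show (1 - x) * (1 - y) - (1 - θ) * x * y = 1 - x - y + θ * x * y by ring] at hW
      simpa only [sub_mul, sub_self] using (hD x y hx₀.le hx₁ hy₀.le hy₁ hxy).sub hW
  intro j k _
  exact sub_eq_zero.mp (congrFun (congrFun hcoeff j) k)
end

section
/- Let u₁, u₂ ∈ [0,1) and θ ∈ [0,1) with u₁ + u₂ - θ u₁ u₂ < 1. Writing -log(1 - u₁ - u₂ + θ u₁ u₂) = ∑_{j,k≥0} C_{j,k} u₁^j u₂^k, one has C_{0,0}=0, C_{j,0}=1/j and C_{0,k}=1/k for j,k ≥ 1, and for 1 ≤ j ≤ k, C_{j,k} = ∑_{p=1}^{j} ((1-θ)^p / p) · C(j-1,p-1) · C(k-1,p-1). -/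
/-!
For fixed `u₂ ∈ [0, 1)` one has `1 - u₁ - u₂ + θ u₁ u₂ = (1 - u₂) (1 - c u₁)` with
`c = (1 - θ u₂) / (1 - u₂)`, so for small `u₁ ≥ 0` the logarithm expands as
`-log (1 - u₂) + ∑_{j ≥ 1} c ^ j / j * u₁ ^ j`. Summing the double series by rows and using
uniqueness of power series coefficients on an interval `[0, r)`, the `j`-th row sum
`∑_k C j k * u₂ ^ k` equals this coefficient. Writing `c = 1 + (1 - θ) v` with
`v = u₂ / (1 - u₂) = ∑_{k ≥ 1} u₂ ^ k`, the binomial theorem, `j * C(j-1, p-1) = p * C(j, p)` and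
`v ^ p = ∑_k C(k-1, p-1) u₂ ^ k` give the coefficients of `c ^ j / j` in `u₂`; uniqueness once more
identifies them with `C j k`.
-/

open Finset Topology

theorem coeff_eq_zero_of_hasSum_pow_eq_zero {a : ℕ → ℝ} {r : ℝ} (hr : 0 < r)
    (h : ∀ u ∈ Set.Ico 0 r, HasSum (fun n => a n * u ^ n) 0) : a = 0 := by
  set p := FormalMultilinearSeries.ofScalars ℝ a
  have hp : ∀ u n, p n (fun _ => u) = a n * u ^ n := fun u n => by
    simp [p, mul_comm]
  have hradius : ((r / 2).toNNReal : ENNReal) ≤ p.radius := by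
    refine p.le_radius_of_summable_norm ?_
    rw [Real.coe_toNNReal _ (by positivity)]
    have := (h (r / 2) ⟨by positivity, by linarith⟩).summable.norm
    simpa [p, FormalMultilinearSeries.ofScalars_norm, norm_mul, abs_of_pos hr, hr.le] using this
  have hball := p.hasFPowerSeriesOnBall
    (lt_of_lt_of_le (by simpa using half_pos hr) hradius)
  have hfreq : ∃ᶠ z in 𝓝[≠] (0 : ℝ), p.sum z = 0 := by
    have hev : ∀ᶠ z in 𝓝[>] (0 : ℝ), p.sum z = 0 := by
      filter_upwards [Ioo_mem_nhdsGT hr] with z hz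
      exact (by simpa only [hp] using h z ⟨hz.1.le, hz.2⟩ : HasSum (fun n => p n _) 0).tsum_eq
    exact hev.frequently.filter_mono (nhdsWithin_mono 0 fun x hx => ne_of_gt hx)
  have hp0 : p = 0 := hball.hasFPowerSeriesAt.eq_zero_of_eventually
    (hball.analyticAt.frequently_zero_iff_eventually_zero.mp hfreq)
  exact (FormalMultilinearSeries.ofScalars_series_eq_zero ℝ).mp hp0

theorem coeff_eq_of_hasSum_pow {a b : ℕ → ℝ} {f : ℝ → ℝ} {r : ℝ} (hr : 0 < r)
    (ha : ∀ u ∈ Set.Ico 0 r, HasSum (fun n => a n * u ^ n) (f u))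
    (hb : ∀ u ∈ Set.Ico 0 r, HasSum (fun n => b n * u ^ n) (f u)) : a = b := by
  have := coeff_eq_zero_of_hasSum_pow_eq_zero (a := a - b) hr fun u hu => by
    simpa [sub_mul] using (ha u hu).sub (hb u hu)
  exact sub_eq_zero.mp this

theorem hasSum_ite_choose_pred_mul_pow {𝕜 : Type*} [NormedField 𝕜] (q : ℕ) {u : 𝕜}
    (hu : ‖u‖ < 1) :
    HasSum (fun k => (if k = 0 then 0 else ((k - 1).choose q : 𝕜)) * u ^ k)
      ((u / (1 - u)) ^ (q + 1)) := by
  rw [← hasSum_nat_add_iff' (q + 1)]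
  have hvanish : ∑ k ∈ range (q + 1),
      (if k = 0 then 0 else ((k - 1).choose q : 𝕜)) * u ^ k = 0 := by
    refine sum_eq_zero fun k hk => ?_
    rcases Nat.eq_zero_or_pos k with rfl | hk0
    · simp
    · simp [Nat.choose_eq_zero_of_lt (by simp at hk; omega : k - 1 < q)]
  rw [hvanish, sub_zero, div_pow, div_eq_mul_one_div]
  refine ((hasSum_choose_mul_geometric_of_norm_lt_one q hu).mul_left (u ^ (q + 1))).congr_fun
    fun m => ?_
  rw [if_neg (by omega), show m + (q + 1) - 1 = m + q by omega, pow_add]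
  ring

theorem one_add_pow_div_eq {K : Type*} [Field K] [CharZero K] (x : K) {j : ℕ} (hj : j ≠ 0) :
    (1 + x) ^ j / j = 1 / j + ∑ p ∈ Icc 1 j, x ^ p / p * ((j - 1).choose (p - 1) : K) := by
  obtain ⟨n, rfl⟩ := Nat.exists_eq_add_one_of_ne_zero hj
  rw [add_comm, add_pow, sum_range_succ', ← Ico_add_one_right_eq_Icc, sum_Ico_eq_sum_range]
  simp only [add_tsub_cancel_right, Nat.add_sub_cancel_left, add_div, sum_div]
  rw [add_comm]
  congr 1
  · simp
  refine sum_congr rfl fun i _ => ?_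
  have := congrArg (Nat.cast : ℕ → K) (Nat.add_one_mul_choose_eq n i)
  rw [add_comm 1 i]
  push_cast at this ⊢
  have hi : (i : K) + 1 ≠ 0 := Nat.cast_add_one_ne_zero i
  have hn : (n : K) + 1 ≠ 0 := Nat.cast_add_one_ne_zero n
  field_simp
  linear_combination x ^ (i + 1) * this.symm

theorem hasSum_neg_log_one_sub {u : ℝ} (hu : |u| < 1) :
    HasSum (fun k : ℕ => (if k = 0 then 0 else 1 / (k : ℝ)) * u ^ k) (-Real.log (1 - u)) := by
  rw [← hasSum_nat_add_iff' 1]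
  simpa [div_eq_inv_mul, add_comm] using Real.hasSum_pow_div_log_of_abs_lt_one hu

theorem HasSum.tsum_row_mul_pow {𝕜 : Type*} [NormedField 𝕜] [CompleteSpace 𝕜]
    {C : ℕ → ℕ → 𝕜} {x y s : 𝕜}
    (h : HasSum (fun jk : ℕ × ℕ => C jk.1 jk.2 * x ^ jk.1 * y ^ jk.2) s) :
    HasSum (fun j => (∑' k, C j k * y ^ k) * x ^ j) s := by
  refine h.prod_fiberwise fun j => ?_
  simpa only [mul_right_comm _ (x ^ j), tsum_mul_right] using (h.summable.prod_factor j).hasSum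

theorem Summable.summable_row_of_prod_mul_pow {𝕜 : Type*} [NormedField 𝕜] [CompleteSpace 𝕜]
    {C : ℕ → ℕ → 𝕜} {x y : 𝕜}
    (h : Summable (fun jk : ℕ × ℕ => C jk.1 jk.2 * x ^ jk.1 * y ^ jk.2)) (hx : x ≠ 0) (j : ℕ) :
    Summable (fun k => C j k * y ^ k) := by
  refine ((h.prod_factor j).mul_left (x ^ j)⁻¹).congr fun k => ?_
  field_simp

noncomputable def logCoeff (θ : ℝ) (j k : ℕ) : ℝ :=
  if j = 0 then (if k = 0 then 0 else 1 / k)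
  else if k = 0 then 1 / j
  else ∑ p ∈ Icc 1 j, ((1 - θ) ^ p / p) * ((j - 1).choose (p - 1) : ℝ) *
    ((k - 1).choose (p - 1) : ℝ)

/-- The coefficient of `u₁ ^ j` in `-log (1 - u₁ - u₂ + θ u₁ u₂)`, as a function of `u = u₂`. -/
noncomputable def logRowSum (θ u : ℝ) (j : ℕ) : ℝ :=
  if j = 0 then -Real.log (1 - u) else ((1 - θ * u) / (1 - u)) ^ j / j

theorem hasSum_logCoeff_mul_pow (θ : ℝ) (j : ℕ) {u : ℝ} (hu : |u| < 1) :
    HasSum (fun k => logCoeff θ j k * u ^ k) (logRowSum θ u j) := by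
  rcases eq_or_ne j 0 with rfl | hj
  · simpa [logCoeff, logRowSum] using hasSum_neg_log_one_sub hu
  have hterm : ∀ p ∈ Icc 1 j, HasSum
      (fun k => ((1 - θ) ^ p / p) * ((j - 1).choose (p - 1) : ℝ) *
        ((if k = 0 then 0 else ((k - 1).choose (p - 1) : ℝ)) * u ^ k))
      (((1 - θ) ^ p / p) * ((j - 1).choose (p - 1) : ℝ) * (u / (1 - u)) ^ p) := by
    intro p hp
    have hp1 : p - 1 + 1 = p := Nat.sub_add_cancel (mem_Icc.mp hp).1
    have := hasSum_ite_choose_pred_mul_pow (p - 1) (by rwa [Real.norm_eq_abs])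
    exact hp1 ▸ this.mul_left _
  have hsum := (hasSum_ite_eq 0 (1 / (j : ℝ))).add (hasSum_sum hterm)
  have hval : (1 - θ * u) / (1 - u) = 1 + (1 - θ) * (u / (1 - u)) := by
    have : 1 - u ≠ 0 := by linarith [le_abs_self u]
    field_simp
    ring
  convert hsum using 1
  · funext k
    rcases eq_or_ne k 0 with rfl | hk
    · simp [logCoeff, hj]
    · simp [logCoeff, hj, hk, sum_mul, mul_assoc]
  · rw [logRowSum, if_neg hj, hval, one_add_pow_div_eq _ hj]
    congr 1
    refine sum_congr rfl fun p _ => ?_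
    rw [mul_pow]
    ring

theorem hasSum_logRowSum_mul_pow {θ u₁ u₂ : ℝ} (hu₂ : u₂ < 1)
    (hu₁ : |u₁ * (1 - θ * u₂)| < 1 - u₂) :
    HasSum (fun j => logRowSum θ u₂ j * u₁ ^ j) (-Real.log (1 - u₁ - u₂ + θ * u₁ * u₂)) := by
  have hpos : 0 < 1 - u₂ := by linarith
  set x := u₁ * (1 - θ * u₂) / (1 - u₂)
  have hx : |x| < 1 := by rwa [abs_div, abs_of_pos hpos, div_lt_one hpos]
  have hsplit : -Real.log (1 - u₁ - u₂ + θ * u₁ * u₂) - -Real.log (1 - u₂) = -Real.log (1 - x) := by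
    have h1x : 0 < 1 - x := by linarith [le_abs_self x]
    have : 1 - u₁ - u₂ + θ * u₁ * u₂ = (1 - x) * (1 - u₂) := by
      simp only [x]
      field_simp
      ring
    rw [this, Real.log_mul h1x.ne' hpos.ne']
    ring
  rw [← hasSum_nat_add_iff' 1, sum_range_one, logRowSum, if_pos rfl, pow_zero, mul_one, hsplit]
  refine (Real.hasSum_pow_div_log_of_abs_lt_one hx).congr_fun fun n => ?_
  simp only [logRowSum, x, Nat.add_one_ne_zero, if_false, mul_div_assoc, mul_pow]
  push_cast
  ring

theorem hasSum_row_logRowSum {θ : ℝ} (hθ : θ < 1) {C : ℕ → ℕ → ℝ}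
    (hC : ∀ u₁ u₂ : ℝ, 0 ≤ u₁ → u₁ < 1 → 0 ≤ u₂ → u₂ < 1 →
      u₁ + u₂ - θ * u₁ * u₂ < 1 →
      HasSum (fun jk : ℕ × ℕ => C jk.1 jk.2 * u₁ ^ jk.1 * u₂ ^ jk.2)
        (-Real.log (1 - u₁ - u₂ + θ * u₁ * u₂)))
    {u₂ : ℝ} (hu₂ : u₂ ∈ Set.Ico 0 1) (j : ℕ) :
    HasSum (fun k => C j k * u₂ ^ k) (logRowSum θ u₂ j) := by
  obtain ⟨h0, h1⟩ := hu₂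
  have hθu₂ : θ * u₂ ≤ u₂ := by nlinarith
  have hden : 0 < 1 - θ * u₂ := by linarith
  set r := (1 - u₂) / (1 - θ * u₂)
  have hr : 0 < r := div_pos (by linarith) hden
  have hregion : ∀ u₁ ∈ Set.Ico 0 r,
      u₁ < 1 ∧ u₁ + u₂ - θ * u₁ * u₂ < 1 ∧ |u₁ * (1 - θ * u₂)| < 1 - u₂ := by
    rintro u₁ ⟨hu₁, hu₁r⟩
    have := (lt_div_iff₀ hden).mp hu₁r
    exact ⟨by nlinarith, by linarith, by rwa [abs_of_nonneg (by positivity)]⟩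
  have hfull : ∀ u₁ ∈ Set.Ico 0 r,
      HasSum (fun jk : ℕ × ℕ => C jk.1 jk.2 * u₁ ^ jk.1 * u₂ ^ jk.2)
        (-Real.log (1 - u₁ - u₂ + θ * u₁ * u₂)) := fun u₁ hu₁ =>
    hC u₁ u₂ hu₁.1 (hregion u₁ hu₁).1 h0 h1 (hregion u₁ hu₁).2.1
  have hrow : (fun j => ∑' k, C j k * u₂ ^ k) = logRowSum θ u₂ :=
    coeff_eq_of_hasSum_pow hr (fun u₁ hu₁ => (hfull u₁ hu₁).tsum_row_mul_pow)
      (fun u₁ hu₁ => hasSum_logRowSum_mul_pow h1 (hregion u₁ hu₁).2.2)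
  have hsummable := (hfull (r / 2) ⟨by positivity, by linarith⟩).summable
    |>.summable_row_of_prod_mul_pow (by positivity) j
  exact congrFun hrow j ▸ hsummable.hasSum

theorem C_coefficients_general (θ : ℝ) (hθ' : θ < 1) (C : ℕ → ℕ → ℝ)
    (hC : ∀ u₁ u₂ : ℝ, 0 ≤ u₁ → u₁ < 1 → 0 ≤ u₂ → u₂ < 1 →
      u₁ + u₂ - θ * u₁ * u₂ < 1 →
      HasSum (fun jk : ℕ × ℕ => C jk.1 jk.2 * u₁ ^ jk.1 * u₂ ^ jk.2)
        (-Real.log (1 - u₁ - u₂ + θ * u₁ * u₂))) :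
    C 0 0 = 0 ∧
    (∀ j : ℕ, 1 ≤ j → C j 0 = 1 / j) ∧
    (∀ k : ℕ, 1 ≤ k → C 0 k = 1 / k) ∧
    (∀ j k : ℕ, 1 ≤ j → j ≤ k →
      C j k = ∑ p ∈ Finset.Icc 1 j,
        ((1 - θ) ^ p / p) * ((j - 1).choose (p - 1) : ℝ) *
          ((k - 1).choose (p - 1) : ℝ)) := by
  have hC_eq (j k : ℕ) : C j k = logCoeff θ j k := by
    refine congrFun (coeff_eq_of_hasSum_pow one_pos (fun u hu => hasSum_row_logRowSum hθ' hC hu j)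
      fun u hu => hasSum_logCoeff_mul_pow θ j ?_) k
    exact (abs_of_nonneg hu.1).trans_lt hu.2
  refine ⟨by simp [hC_eq, logCoeff], fun j hj => ?_, fun k hk => ?_, fun j k hj hjk => ?_⟩
  · simp [hC_eq, logCoeff, Nat.one_le_iff_ne_zero.mp hj]
  · simp [hC_eq, logCoeff, Nat.one_le_iff_ne_zero.mp hk]
  · simp [hC_eq, logCoeff, Nat.one_le_iff_ne_zero.mp hj, Nat.one_le_iff_ne_zero.mp (hj.trans hjk)]

theorem C_coefficients (θ : ℝ) (hθ : 0 ≤ θ) (hθ' : θ < 1) (C : ℕ → ℕ → ℝ)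
    (hC : ∀ u₁ u₂ : ℝ, 0 ≤ u₁ → u₁ < 1 → 0 ≤ u₂ → u₂ < 1 →
      u₁ + u₂ - θ * u₁ * u₂ < 1 →
      HasSum (fun jk : ℕ × ℕ => C jk.1 jk.2 * u₁ ^ jk.1 * u₂ ^ jk.2)
        (-Real.log (1 - u₁ - u₂ + θ * u₁ * u₂))) :
    C 0 0 = 0 ∧
    (∀ j : ℕ, 1 ≤ j → C j 0 = 1 / j) ∧
    (∀ k : ℕ, 1 ≤ k → C 0 k = 1 / k) ∧
    (∀ j k : ℕ, 1 ≤ j → j ≤ k →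
      C j k = ∑ p ∈ Finset.Icc 1 j,
        ((1 - θ) ^ p / p) * ((j - 1).choose (p - 1) : ℝ) *
          ((k - 1).choose (p - 1) : ℝ)) :=
  C_coefficients_general θ hθ' C hC
end

section
/- Let u₁, u₂ ∈ [0,1) and θ ∈ [0,1) with u₁ + u₂ - θ u₁ u₂ < 1. Then all coefficients C_{j,k} of the power series expansion of -log(1 - u₁ - u₂ + θ u₁ u₂) at the origin are nonnegative, except the constant term which is zero. -/
/-!
With `ρ = 1 - θ` and `w = u₁ u₂ / ((1 - u₁) (1 - u₂))` one has
`1 - u₁ - u₂ + θ u₁ u₂ = (1 - u₁) (1 - u₂) (1 - ρ w)`, hence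
`-log (1 - u₁ - u₂ + θ u₁ u₂) = -log (1 - u₁) - log (1 - u₂) + ∑ₙ (ρ w)ⁿ⁺¹ / (n + 1)`.
Expanding `wⁿ⁺¹ = ∑_{j,k} C(j, n) C(k, n) u₁ʲ⁺¹ u₂ᵏ⁺¹` and regrouping the (nonnegative) triple sum
gives an explicit expansion with nonnegative coefficients. The coefficients of a double power
series are determined by its sums on a box `(0, r)²` (identity theorem, one variable at a time),
so `C` is this explicit family.
-/

open Topology Finset FormalMultilinearSeries

theorem eq_zero_of_hasSum_pow_eq_zero {c : ℕ → ℝ} {r : ℝ} (hr : 0 < r)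
    (h : ∀ x ∈ Set.Ioo 0 r, HasSum (fun n => c n * x ^ n) 0) : c = 0 := by
  set p := ofScalars ℝ c
  obtain ⟨x₀, hx₀⟩ : ∃ x₀ : NNReal, (x₀ : ℝ) ∈ Set.Ioo 0 r :=
    ⟨⟨r / 2, by positivity⟩, show r / 2 ∈ Set.Ioo 0 r from ⟨by positivity, by linarith⟩⟩
  have hrad : (x₀ : ENNReal) ≤ p.radius := by
    refine p.le_radius_of_tendsto (l := 0) ?_
    simpa [p, ofScalars_norm, norm_mul, norm_pow, abs_of_pos hx₀.1] using
      (h _ hx₀).summable.tendsto_atTop_zero.norm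
  have hp : HasFPowerSeriesAt p.sum p 0 :=
    (p.hasFPowerSeriesOnBall
      ((ENNReal.coe_pos.2 (by exact_mod_cast hx₀.1)).trans_le hrad)).hasFPowerSeriesAt
  have hsum_zero : ∀ᶠ x in 𝓝[>] (0 : ℝ), p.sum x = 0 := by
    filter_upwards [Ioo_mem_nhdsGT hx₀.1] with x hx
    exact (ofScalars_sum_eq c x).trans (by simpa using (h x ⟨hx.1, hx.2.trans hx₀.2⟩).tsum_eq)
  have hfreq : ∃ᶠ x in 𝓝[≠] (0 : ℝ), p.sum x = 0 :=
    hsum_zero.frequently.filter_mono (nhdsWithin_mono _ fun x hx => ne_of_gt hx)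
  exact (ofScalars_series_eq_zero ℝ).1 <|
    hp.locally_zero_iff.1 (hp.analyticAt.frequently_zero_iff_eventually_zero.1 hfreq)

theorem eq_zero_of_hasSum_pow_mul_pow_eq_zero {c : ℕ → ℕ → ℝ} {r : ℝ} (hr : 0 < r)
    (h : ∀ u ∈ Set.Ioo 0 r, ∀ v ∈ Set.Ioo 0 r,
      HasSum (fun jk : ℕ × ℕ => c jk.1 jk.2 * u ^ jk.1 * v ^ jk.2) 0) :
    c = 0 := by
  have hrow_summable : ∀ u ∈ Set.Ioo 0 r, ∀ v ∈ Set.Ioo 0 r, ∀ j,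
      Summable fun k => c j k * v ^ k := fun u hu v hv j =>
    (summable_mul_left_iff (pow_ne_zero j hu.1.ne')).1 <|
      ((h u hu v hv).summable.prod_factor j).congr fun k => by ring
  have hrow : ∀ v ∈ Set.Ioo 0 r, ∀ j, ∑' k, c j k * v ^ k = 0 := fun v hv =>
    congrFun <| eq_zero_of_hasSum_pow_eq_zero hr fun u hu =>
      (h u hu v hv).prod_fiberwise fun j =>
        ((hrow_summable u hu v hv j).hasSum.mul_right (u ^ j)).congr_fun fun k => by ring
  funext j
  exact eq_zero_of_hasSum_pow_eq_zero hr fun v hv =>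
    hrow v hv j ▸ (hrow_summable v hv v hv j).hasSum

theorem eq_of_hasSum_pow_mul_pow {c d : ℕ → ℕ → ℝ} {r : ℝ} (hr : 0 < r) {f : ℝ → ℝ → ℝ}
    (hc : ∀ u ∈ Set.Ioo 0 r, ∀ v ∈ Set.Ioo 0 r,
      HasSum (fun jk : ℕ × ℕ => c jk.1 jk.2 * u ^ jk.1 * v ^ jk.2) (f u v))
    (hd : ∀ u ∈ Set.Ioo 0 r, ∀ v ∈ Set.Ioo 0 r,
      HasSum (fun jk : ℕ × ℕ => d jk.1 jk.2 * u ^ jk.1 * v ^ jk.2) (f u v)) :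
    c = d :=
  sub_eq_zero.1 <| eq_zero_of_hasSum_pow_mul_pow_eq_zero hr fun u hu v hv => by
    simpa [sub_mul] using (hc u hu v hv).sub (hd u hu v hv)

theorem hasSum_of_hasSum_fiberwise_of_nonneg {β γ : Type*} {f : β × γ → ℝ} {g : β → ℝ} {a : ℝ}
    (hf : 0 ≤ f) (hfib : ∀ b, HasSum (fun c => f (b, c)) (g b)) (hg : HasSum g a) :
    HasSum f a := by
  have hs : Summable f := (summable_prod_of_nonneg hf).2
    ⟨fun b => (hfib b).summable, hg.summable.congr fun b => ((hfib b).tsum_eq).symm⟩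
  exact (hs.hasSum.prod_fiberwise hfib).unique hg ▸ hs.hasSum

theorem hasSum_inv_mul_pow_neg_log_one_sub {x : ℝ} (hx : |x| < 1) :
    HasSum (fun n : ℕ => (n : ℝ)⁻¹ * x ^ n) (-Real.log (1 - x)) := by
  refine (hasSum_nat_add_iff' 1).1 ?_
  simpa [div_eq_inv_mul] using Real.hasSum_pow_div_log_of_abs_lt_one hx

theorem hasSum_choose_mul_pow_succ {𝕜 : Type*} [NormedField 𝕜] [HasSummableGeomSeries 𝕜]
    (n : ℕ) {u : 𝕜} (hu : ‖u‖ < 1) :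
    HasSum (fun j : ℕ => (j.choose n : 𝕜) * u ^ (j + 1)) ((u / (1 - u)) ^ (n + 1)) := by
  have h := (hasSum_choose_mul_geometric_of_norm_lt_one n hu).mul_left (u ^ (n + 1))
  refine (hasSum_nat_add_iff' n).1 ?_
  rw [sum_eq_zero fun j hj => by simp [Nat.choose_eq_zero_of_lt (mem_range.1 hj)], sub_zero,
    div_pow, div_eq_mul_one_div]
  exact h.congr_fun fun m => by ring

theorem hasSum_choose_mul_choose_mul_pow_succ (n : ℕ) {u v : ℝ} (hu₀ : 0 ≤ u) (hu₁ : u < 1)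
    (hv₀ : 0 ≤ v) (hv₁ : v < 1) :
    HasSum (fun jk : ℕ × ℕ =>
        (jk.1.choose n : ℝ) * u ^ (jk.1 + 1) * ((jk.2.choose n : ℝ) * v ^ (jk.2 + 1)))
      ((u / (1 - u) * (v / (1 - v))) ^ (n + 1)) := by
  have hu := hasSum_choose_mul_pow_succ (𝕜 := ℝ) n (by rwa [Real.norm_of_nonneg hu₀])
  have hv := hasSum_choose_mul_pow_succ (𝕜 := ℝ) n (by rwa [Real.norm_of_nonneg hv₀])
  have hs := hu.summable.mul_of_nonneg hv.summable (fun j => by positivity) (fun k => by positivity)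
  rw [mul_pow]
  exact hu.mul hv hs

theorem hasSum_neg_log_one_sub_mul_div_mul_div {ρ u v : ℝ} (hρ : 0 ≤ ρ) (hu₀ : 0 ≤ u)
    (hu₁ : u < 1) (hv₀ : 0 ≤ v) (hv₁ : v < 1) (h : ρ * (u / (1 - u) * (v / (1 - v))) < 1) :
    HasSum (fun jk : ℕ × ℕ =>
        (∑ n ∈ range (min jk.1 jk.2 + 1), ρ ^ (n + 1) / (n + 1) * jk.1.choose n * jk.2.choose n) *
          u ^ (jk.1 + 1) * v ^ (jk.2 + 1))
      (-Real.log (1 - ρ * (u / (1 - u) * (v / (1 - v))))) := by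
  set w := u / (1 - u) * (v / (1 - v))
  have hw : 0 ≤ w := by have := sub_pos.2 hu₁; have := sub_pos.2 hv₁; positivity
  set T : ℕ × ℕ × ℕ → ℝ := fun p => ρ ^ (p.1 + 1) / (p.1 + 1) *
    ((p.2.1.choose p.1 : ℝ) * u ^ (p.2.1 + 1) * ((p.2.2.choose p.1 : ℝ) * v ^ (p.2.2 + 1)))
  have hfib : ∀ n : ℕ,
      HasSum (fun jk : ℕ × ℕ => T (n, jk)) (ρ ^ (n + 1) / (n + 1) * w ^ (n + 1)) :=
    fun n => (hasSum_choose_mul_choose_mul_pow_succ n hu₀ hu₁ hv₀ hv₁).mul_left _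
  have hlog : HasSum (fun n : ℕ => ρ ^ (n + 1) / (n + 1) * w ^ (n + 1))
      (-Real.log (1 - ρ * w)) := by
    have hρw : |ρ * w| < 1 := by rwa [abs_of_nonneg (by positivity)]
    refine (Real.hasSum_pow_div_log_of_abs_lt_one hρw).congr_fun fun n => ?_
    rw [mul_pow]
    ring
  have hT : HasSum T (-Real.log (1 - ρ * w)) :=
    hasSum_of_hasSum_fiberwise_of_nonneg (fun p => by positivity) hfib hlog
  refine ((Equiv.prodComm _ _).hasSum_iff.2 hT).prod_fiberwise fun jk => ?_
  rw [sum_mul, sum_mul]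
  refine (hasSum_sum_of_ne_finset_zero fun n hn => ?_).congr_fun fun n => ?_
  · obtain hlt | hlt : jk.1 < n ∨ jk.2 < n := by rw [mem_range] at hn; omega
    all_goals simp [Nat.choose_eq_zero_of_lt hlt]
  · simp only [Function.comp_apply, Equiv.prodComm_apply, Prod.swap_prod_mk, T]
    ring

theorem hasSum_ite_inv_mul_pow_mul_pow {u : ℝ} (v : ℝ) (hu : |u| < 1) :
    HasSum (fun jk : ℕ × ℕ => (if jk.2 = 0 then (jk.1 : ℝ)⁻¹ else 0) * u ^ jk.1 * v ^ jk.2)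
      (-Real.log (1 - u)) := by
  refine (Function.Injective.hasSum_iff (g := fun j : ℕ => (j, 0))
    (fun a b hab => (Prod.ext_iff.1 hab).1) ?_).1 ?_
  · rintro ⟨j, k⟩ hjk
    have hk : k ≠ 0 := by rintro rfl; exact hjk ⟨j, rfl⟩
    simp [hk]
  · simpa [Function.comp_def] using hasSum_inv_mul_pow_neg_log_one_sub hu

/-- `(j : ℝ)⁻¹` is `0` at `j = 0`, so the constant coefficient vanishes. -/
noncomputable def negLogCoeff (θ : ℝ) (j k : ℕ) : ℝ :=
  (if k = 0 then (j : ℝ)⁻¹ else 0) + (if j = 0 then (k : ℝ)⁻¹ else 0) +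
    ∑ n ∈ range (min j k), (1 - θ) ^ (n + 1) / (n + 1) * (j - 1).choose n * (k - 1).choose n

theorem negLogCoeff_zero_zero (θ : ℝ) : negLogCoeff θ 0 0 = 0 := by
  simp [negLogCoeff]

theorem negLogCoeff_nonneg {θ : ℝ} (hθ : θ ≤ 1) (j k : ℕ) : 0 ≤ negLogCoeff θ j k := by
  have : 0 ≤ 1 - θ := sub_nonneg.2 hθ
  unfold negLogCoeff
  positivity

theorem hasSum_sum_range_min_mul_pow_mul_pow {ρ u v : ℝ} (hρ : 0 ≤ ρ) (hu₀ : 0 ≤ u)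
    (hu₁ : u < 1) (hv₀ : 0 ≤ v) (hv₁ : v < 1) (h : ρ * (u / (1 - u) * (v / (1 - v))) < 1) :
    HasSum (fun jk : ℕ × ℕ => (∑ n ∈ range (min jk.1 jk.2),
        ρ ^ (n + 1) / (n + 1) * (jk.1 - 1).choose n * (jk.2 - 1).choose n) *
          u ^ jk.1 * v ^ jk.2)
      (-Real.log (1 - ρ * (u / (1 - u) * (v / (1 - v))))) := by
  refine (Function.Injective.hasSum_iff (g := fun jk : ℕ × ℕ => (jk.1 + 1, jk.2 + 1))
    (fun a b hab => by simpa [Prod.ext_iff] using hab) ?_).1 ?_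
  · rintro ⟨j, k⟩ hjk
    have : min j k = 0 := by
      by_contra hne
      exact hjk ⟨(j - 1, k - 1), by simp only [Prod.ext_iff]; omega⟩
    simp [this]
  · refine (hasSum_neg_log_one_sub_mul_div_mul_div hρ hu₀ hu₁ hv₀ hv₁ h).congr_fun fun jk => ?_
    simp [Nat.add_min_add_right]

theorem hasSum_negLogCoeff {θ u v : ℝ} (hθ : θ ≤ 1) (hu₀ : 0 ≤ u) (hu₁ : u < 1) (hv₀ : 0 ≤ v)
    (hv₁ : v < 1) (h : u + v - θ * u * v < 1) :
    HasSum (fun jk : ℕ × ℕ => negLogCoeff θ jk.1 jk.2 * u ^ jk.1 * v ^ jk.2)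
      (-Real.log (1 - u - v + θ * u * v)) := by
  have hu : 0 < 1 - u := sub_pos.2 hu₁
  have hv : 0 < 1 - v := sub_pos.2 hv₁
  set w := u / (1 - u) * (v / (1 - v))
  have hfactor : 1 - u - v + θ * u * v = (1 - u) * (1 - v) * (1 - (1 - θ) * w) := by
    simp only [w]
    field_simp
    ring
  have hρw : 0 < 1 - (1 - θ) * w := by
    have hpos : 0 < (1 - u) * (1 - v) * (1 - (1 - θ) * w) := by rw [← hfactor]; linarith
    exact pos_of_mul_pos_right hpos (mul_pos hu hv).le
  have haxis₁ := hasSum_ite_inv_mul_pow_mul_pow v (abs_lt.2 ⟨by linarith, hu₁⟩)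
  have haxis₂ : HasSum
      (fun jk : ℕ × ℕ => (if jk.1 = 0 then (jk.2 : ℝ)⁻¹ else 0) * u ^ jk.1 * v ^ jk.2)
      (-Real.log (1 - v)) := by
    refine (Equiv.prodComm ℕ ℕ).hasSum_iff.1 <|
      (hasSum_ite_inv_mul_pow_mul_pow u (abs_lt.2 ⟨by linarith, hv₁⟩)).congr_fun fun jk => ?_
    by_cases hk : jk.2 = 0 <;> simp [hk, mul_comm]
  have hinterior :=
    hasSum_sum_range_min_mul_pow_mul_pow (sub_nonneg.2 hθ) hu₀ hu₁ hv₀ hv₁ (by linarith)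
  rw [hfactor, Real.log_mul (by positivity) hρw.ne', Real.log_mul hu.ne' hv.ne']
  convert (haxis₁.add haxis₂).add hinterior using 1
  · funext jk
    simp only [negLogCoeff]
    ring
  · ring

theorem C_coefficients_nonneg (θ : ℝ) (hθ : 0 ≤ θ) (hθ' : θ < 1) (C : ℕ → ℕ → ℝ)
    (hC : ∀ u₁ u₂ : ℝ, 0 ≤ u₁ → u₁ < 1 → 0 ≤ u₂ → u₂ < 1 →
      u₁ + u₂ - θ * u₁ * u₂ < 1 →
      HasSum (fun jk : ℕ × ℕ => C jk.1 jk.2 * u₁ ^ jk.1 * u₂ ^ jk.2)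
        (-Real.log (1 - u₁ - u₂ + θ * u₁ * u₂))) :
    C 0 0 = 0 ∧ ∀ j k : ℕ, (j, k) ≠ (0, 0) → 0 ≤ C j k := by
  have hdomain : ∀ u ∈ Set.Ioo (0 : ℝ) (1 / 2), ∀ v ∈ Set.Ioo (0 : ℝ) (1 / 2),
      0 ≤ u ∧ u < 1 ∧ 0 ≤ v ∧ v < 1 ∧ u + v - θ * u * v < 1 := by
    rintro u ⟨hu₀, hu₁⟩ v ⟨hv₀, hv₁⟩
    refine ⟨hu₀.le, by linarith, hv₀.le, by linarith, ?_⟩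
    nlinarith [mul_nonneg (mul_nonneg hθ hu₀.le) hv₀.le]
  have hC_eq : C = negLogCoeff θ := by
    refine eq_of_hasSum_pow_mul_pow one_half_pos
      (f := fun u v => -Real.log (1 - u - v + θ * u * v)) (fun u hu v hv => ?_) (fun u hu v hv => ?_) <;>
      obtain ⟨h₁, h₂, h₃, h₄, h₅⟩ := hdomain u hu v hv
    exacts [hC u v h₁ h₂ h₃ h₄ h₅, hasSum_negLogCoeff hθ'.le h₁ h₂ h₃ h₄ h₅]
  subst hC_eq
  exact ⟨negLogCoeff_zero_zero θ, fun j k _ => negLogCoeff_nonneg hθ'.le j k⟩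
end
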